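/- arXiv:1112.3261 — 2 statements merged into one kernel-verified Lean document; each statement's English description precedes it below -/
import Mathlib

section
/- Let −3 ≤ γ < −2. There exists C > 0 such that for all ξ ∈ ℝ³: ∫_{ℝ³} |ξ − ξ'|^{2(γ+2)} e^{−|ξ'|²/4} dξ' ≤ C (1 + |ξ|²)^{γ+2}. In particular, since |B^{ij}(z)| ≤ |z|^{γ+2}, one gets ( ∫_{ℝ³} |B^{ij}(ξ−ξ')|² M(ξ')^{1/2} dξ' )^{1/2} ≤ C ⟨ξ⟩^{γ+2} for all 1 ≤ i,j ≤ 3 and ξ ∈ ℝ³. -/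
open MeasureTheory Real

noncomputable section VPL

/-- The velocity/space domain `ℝ³`. -/
abbrev E3 : Type := EuclideanSpace ℝ (Fin 3)

/-- Japanese bracket `⟨ξ⟩ = (1+|ξ|²)^{1/2}`. -/
def jap (ξ : E3) : ℝ := Real.sqrt (1 + ‖ξ‖ ^ 2)

/-- Normalized global Maxwellian `M(ξ) = (2π)^{-3/2} e^{-|ξ|²/2}`. -/
def Mx (ξ : E3) : ℝ := (2 * π) ^ (-(3 : ℝ) / 2) * Real.exp (-‖ξ‖ ^ 2 / 2)

/-- `M^{1/2}`. -/
def sqrtM (ξ : E3) : ℝ := Real.sqrt (Mx ξ)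

/-- Partial derivative in the `i`-th coordinate. -/
def pd (i : Fin 3) (f : E3 → ℝ) (ξ : E3) : ℝ :=
  fderiv ℝ f ξ (EuclideanSpace.single i 1)

/-- The Landau collision kernel `B^{ij}(ξ) = (δ_{ij} - ξ_iξ_j/|ξ|²)|ξ|^{γ+2}`. -/
def Bij (γ : ℝ) (i j : Fin 3) (ξ : E3) : ℝ :=
  ((if i = j then (1 : ℝ) else 0) - ξ i * ξ j / ‖ξ‖ ^ 2) * ‖ξ‖ ^ (γ + 2)

/-- The Landau collision operator `Q(f,g)`. -/
def Qop (γ : ℝ) (f g : E3 → ℝ) (ξ : E3) : ℝ :=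
  ∑ i : Fin 3, ∑ j : Fin 3,
    pd i (fun ζ => ∫ ξ', Bij γ i j (ζ - ξ') * (f ξ' * pd j g ζ - pd j f ξ' * g ζ)) ξ

/-- The linearized Landau operator `L`. -/
def Lop (γ : ℝ) (u : E3 → ℝ) (ξ : E3) : ℝ :=
  -((Mx ξ) ^ (-(1 : ℝ) / 2)) *
    (Qop γ Mx (fun ζ => sqrtM ζ * u ζ) ξ + Qop γ (fun ζ => sqrtM ζ * u ζ) Mx ξ)

/-- The nonlinear term `Γ(u₁,u₂)`. -/
def Gam (γ : ℝ) (u₁ u₂ : E3 → ℝ) (ξ : E3) : ℝ :=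
  (Mx ξ) ^ (-(1 : ℝ) / 2) *
    Qop γ (fun ζ => sqrtM ζ * u₁ ζ) (fun ζ => sqrtM ζ * u₂ ζ) ξ

/-- The Landau collision frequency `σ^{ij} = B^{ij} ∗ M`. -/
def sigmaij (γ : ℝ) (i j : Fin 3) (ξ : E3) : ℝ := ∫ ξ', Bij γ i j (ξ - ξ') * Mx ξ'

/-- The time–velocity weight `w_{τ,λ}(t,ξ) = ⟨ξ⟩^{(γ+2)τ} exp(λ⟨ξ⟩²/(1+t)^ϑ)`. -/
def wt (γ τ lam ϑ t : ℝ) (ξ : E3) : ℝ :=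
  jap ξ ^ ((γ + 2) * τ) * Real.exp (lam * jap ξ ^ 2 / (1 + t) ^ ϑ)

/-- Weighted `L²_ξ` norm squared `|u|²_{τ,λ}`. -/
def vnormSq (γ τ lam ϑ t : ℝ) (u : E3 → ℝ) : ℝ :=
  ∫ ξ, (wt γ τ lam ϑ t ξ) ^ 2 * (u ξ) ^ 2

/-- Weighted dissipation norm squared `|u|²_{σ,τ,λ}`. -/
def vsigSq (γ τ lam ϑ t : ℝ) (u : E3 → ℝ) : ℝ :=
  ∑ i : Fin 3, ∑ j : Fin 3, ∫ ξ,
    (wt γ τ lam ϑ t ξ) ^ 2 *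
      (sigmaij γ i j ξ * pd i u ξ * pd j u ξ +
        sigmaij γ i j ξ * (ξ i / 2) * (ξ j / 2) * (u ξ) ^ 2)

/-- `L²_ξ` inner product. -/
def ipv (u v : E3 → ℝ) : ℝ := ∫ ξ, u ξ * v ξ

/-- Macroscopic coefficient `a`. -/
def aC (u : E3 → ℝ) : ℝ := ∫ ξ, sqrtM ξ * u ξ

/-- Macroscopic coefficient `b_i`. -/
def bC (i : Fin 3) (u : E3 → ℝ) : ℝ := ∫ ξ, ξ i * sqrtM ξ * u ξ

/-- Macroscopic coefficient `c`. -/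
def cC (u : E3 → ℝ) : ℝ := (1 / 6) * ∫ ξ, (‖ξ‖ ^ 2 - 3) * sqrtM ξ * u ξ

/-- Macroscopic projection `Pu`. -/
def Pv (u : E3 → ℝ) (ξ : E3) : ℝ :=
  (aC u + (∑ i : Fin 3, bC i u * ξ i) + cC u * (‖ξ‖ ^ 2 - 3)) * sqrtM ξ

/-- Microscopic part `{I - P}u`. -/
def IPv (u : E3 → ℝ) (ξ : E3) : ℝ := u ξ - Pv u ξ

/-- Multi-indices on `ℝ³` as triples of naturals. -/
abbrev MIdx : Type := ℕ × ℕ × ℕ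

/-- Length `|β|` of a multi-index. -/
def deg (β : MIdx) : ℕ := β.1 + β.2.1 + β.2.2

/-- Iterated partial derivative `∂^β`. -/
def pdM (β : MIdx) (f : E3 → ℝ) : E3 → ℝ :=
  (pd 0)^[β.1] ((pd 1)^[β.2.1] ((pd 2)^[β.2.2] f))

/-- The finite set of multi-indices of length at most `N`. -/
def midx (N : ℕ) : Finset MIdx :=
  ((Finset.range (N + 1)) ×ˢ (Finset.range (N + 1)) ×ˢ (Finset.range (N + 1))).filter
    fun β => deg β ≤ N

/-- Pairs `(α,β)` of multi-indices with `|α|+|β| ≤ N`. -/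
def midxP (N : ℕ) : Finset (MIdx × MIdx) :=
  ((midx N) ×ˢ (midx N)).filter fun p => deg p.1 + deg p.2 ≤ N

/-- Partial derivative in the space variable of `u = u(x,ξ)`. -/
def pdx (i : Fin 3) (u : E3 → E3 → ℝ) : E3 → E3 → ℝ :=
  fun x ξ => fderiv ℝ (fun y => u y ξ) x (EuclideanSpace.single i 1)

/-- Iterated space derivative `∂^α_x` of `u = u(x,ξ)`. -/
def pdxM (α : MIdx) (u : E3 → E3 → ℝ) : E3 → E3 → ℝ :=
  (pdx 0)^[α.1] ((pdx 1)^[α.2.1] ((pdx 2)^[α.2.2] u))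

/-- Mixed derivative `∂^α_β = ∂^α_x ∂^β_ξ` of `u = u(x,ξ)`. -/
def pdab (α β : MIdx) (u : E3 → E3 → ℝ) : E3 → E3 → ℝ :=
  fun x => pdM β (pdxM α u x)

/-- Weighted `L²_{x,ξ}` norm squared `‖u‖²_{τ,λ}`. -/
def xnormSq (γ τ lam ϑ t : ℝ) (u : E3 → E3 → ℝ) : ℝ := ∫ x, vnormSq γ τ lam ϑ t (u x)

/-- Weighted dissipation norm squared `‖u‖²_{σ,τ,λ}`. -/
def xsigSq (γ τ lam ϑ t : ℝ) (u : E3 → E3 → ℝ) : ℝ := ∫ x, vsigSq γ τ lam ϑ t (u x)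

/-- `L²_{x,ξ}` inner product. -/
def ipx (u v : E3 → E3 → ℝ) : ℝ := ∫ x, ∫ ξ, u x ξ * v x ξ

/-- `a(x)`. -/
def aF (u : E3 → E3 → ℝ) (x : E3) : ℝ := aC (u x)

/-- `b_i(x)`. -/
def bF (i : Fin 3) (u : E3 → E3 → ℝ) (x : E3) : ℝ := bC i (u x)

/-- `c(x)`. -/
def cF (u : E3 → E3 → ℝ) (x : E3) : ℝ := cC (u x)

/-- `{I-P}u` for `u = u(x,ξ)`. -/
def IPx (u : E3 → E3 → ℝ) : E3 → E3 → ℝ := fun x => IPv (u x)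

/-- The Poisson potential `φ = -(4π|x|)^{-1} ∗ ρ`. -/
def poisson (ρ : E3 → ℝ) (x : E3) : ℝ := -∫ y, ρ y / (4 * π * ‖x - y‖)

/-- The self-consistent potential of `u`. -/
def phiF (u : E3 → E3 → ℝ) : E3 → ℝ := poisson (aF u)

/-- `L²_x` norm squared. -/
def L2Sq (f : E3 → ℝ) : ℝ := ∫ x, (f x) ^ 2

/-- `H^N_x` norm squared. -/
def HsobSq (N : ℕ) (f : E3 → ℝ) : ℝ := ∑ α ∈ midx N, L2Sq (pdM α f)

/-- `‖∇_x f‖²_{H^N}`. -/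
def gradSobSq (N : ℕ) (f : E3 → ℝ) : ℝ := ∑ i : Fin 3, HsobSq N (pd i f)

/-- `‖∇_x (a,b,c)‖²_{H^N}`. -/
def abcGradSobSq (N : ℕ) (u : E3 → E3 → ℝ) : ℝ :=
  gradSobSq N (aF u) + (∑ i : Fin 3, gradSobSq N (bF i u)) + gradSobSq N (cF u)

/-- `‖∇²_x f‖²_{H^N}`. -/
def hessSobSq (N : ℕ) (f : E3 → ℝ) : ℝ :=
  ∑ i : Fin 3, ∑ j : Fin 3, HsobSq N (pd i (pd j f))

/-- Full instant energy norm `|||u(t)|||²_{N,ℓ,λ}`. -/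
def triSq (γ : ℝ) (N : ℕ) (ℓ lam ϑ t : ℝ) (u : E3 → E3 → ℝ) : ℝ :=
  (∑ p ∈ midxP N, xnormSq γ ((deg p.2 : ℝ) - ℓ) lam ϑ t (pdab p.1 p.2 u))
    + gradSobSq N (phiF u)

/-- `Z₁ = L²_ξ(L¹_x)` norm. -/
def Z1 (u : E3 → E3 → ℝ) : ℝ := Real.sqrt (∫ ξ, (∫ x, |u x ξ|) ^ 2)

/-- Un-currying of a Schwartz function on `ℝ³_x × ℝ³_ξ`. -/
def uc (u : SchwartzMap (E3 × E3) ℝ) : E3 → E3 → ℝ := fun x ξ => u (x, ξ)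

end VPL

/-!
With `a = 2(γ + 2) ∈ [-2, 0)`, Peetre's inequality `⟨ξ⟩² ≤ 2 ⟨ξ - ξ'⟩² ⟨ξ'⟩²` moves the weight
`⟨ξ⟩^{-a}` onto the Gaussian, and `⟨z⟩^{-a} |z|^a ≲ 1 + |z|^a`. What remains is the convolution of
`|·|^a`, locally integrable because `a > -3`, with the bounded integrable function
`⟨ξ'⟩^{-a} e^{-|ξ'|²/4}`, which is bounded uniformly in `ξ`. The estimate for `B^{ij}` follows from
`|δ_{ij} - z_i z_j / |z|²| ≤ 1` and `M^{1/2}(ξ) ≤ e^{-|ξ|²/4}`.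
-/

open Metric Set
open scoped ENNReal

theorem one_add_norm_add_sq_le {F : Type*} [SeminormedAddCommGroup F] (x y : F) :
    1 + ‖x + y‖ ^ 2 ≤ 2 * (1 + ‖x‖ ^ 2) * (1 + ‖y‖ ^ 2) := by
  have := norm_add_le x y
  nlinarith [norm_nonneg (x + y), sq_nonneg (‖x‖ - ‖y‖), mul_nonneg (sq_nonneg ‖x‖) (sq_nonneg ‖y‖)]

theorem one_add_sq_rpow_mul_rpow_le {r a : ℝ} (hr : 0 ≤ r) (ha : a ≤ 0) :
    (1 + r ^ 2) ^ (-a / 2) * r ^ a ≤ 2 ^ (-a / 2) * (r ^ a + 1) := by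
  have hs : 0 ≤ -a / 2 := by linarith
  rcases le_total r 1 with hr1 | hr1
  · have h : (1 + r ^ 2) ^ (-a / 2) ≤ 2 ^ (-a / 2) :=
      Real.rpow_le_rpow (by positivity) (by nlinarith) hs
    have := Real.rpow_nonneg hr a
    nlinarith [Real.rpow_nonneg zero_le_two (-a / 2)]
  · have hr0 : 0 < r := by linarith
    have h : (1 + r ^ 2) ^ (-a / 2) ≤ 2 ^ (-a / 2) * r ^ (-a) := by
      calc (1 + r ^ 2) ^ (-a / 2) ≤ (2 * r ^ 2) ^ (-a / 2) :=
            Real.rpow_le_rpow (by positivity) (by nlinarith) hs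
        _ = 2 ^ (-a / 2) * r ^ (-a) := by
            rw [Real.mul_rpow zero_le_two (by positivity), ← Real.rpow_natCast,
              ← Real.rpow_mul hr]
            ring_nf
    calc (1 + r ^ 2) ^ (-a / 2) * r ^ a ≤ 2 ^ (-a / 2) * r ^ (-a) * r ^ a :=
          mul_le_mul_of_nonneg_right h (Real.rpow_nonneg hr a)
      _ = 2 ^ (-a / 2) := by
          rw [Real.rpow_neg hr, mul_assoc, inv_mul_cancel₀ (Real.rpow_pos_of_pos hr0 a).ne',
            mul_one]
      _ ≤ 2 ^ (-a / 2) * (r ^ a + 1) := by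
          nlinarith [Real.rpow_nonneg hr a, Real.rpow_nonneg zero_le_two (-a / 2)]

theorem one_add_norm_sq_rpow_mul_rpow_norm_sub_le {F : Type*} [SeminormedAddCommGroup F]
    {a : ℝ} (ha : a ≤ 0) (ξ y : F) :
    (1 + ‖ξ‖ ^ 2) ^ (-a / 2) * ‖ξ - y‖ ^ a ≤
      2 ^ (-a) * (‖ξ - y‖ ^ a + 1) * (1 + ‖y‖ ^ 2) ^ (-a / 2) := by
  have hs : 0 ≤ -a / 2 := by linarith
  have hpeetre : (1 + ‖ξ‖ ^ 2) ^ (-a / 2) ≤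
      2 ^ (-a / 2) * (1 + ‖ξ - y‖ ^ 2) ^ (-a / 2) * (1 + ‖y‖ ^ 2) ^ (-a / 2) := by
    rw [← Real.mul_rpow (by positivity) (by positivity),
      ← Real.mul_rpow (by positivity) (by positivity)]
    refine Real.rpow_le_rpow (by positivity) ?_ hs
    simpa using one_add_norm_add_sq_le (ξ - y) y
  have hlocal := one_add_sq_rpow_mul_rpow_le (norm_nonneg (ξ - y)) ha
  have h2 : (2 : ℝ) ^ (-a) = 2 ^ (-a / 2) * 2 ^ (-a / 2) := by
    rw [← Real.rpow_add two_pos]; ring_nf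
  calc (1 + ‖ξ‖ ^ 2) ^ (-a / 2) * ‖ξ - y‖ ^ a
      ≤ 2 ^ (-a / 2) * (1 + ‖ξ - y‖ ^ 2) ^ (-a / 2) * (1 + ‖y‖ ^ 2) ^ (-a / 2)
          * ‖ξ - y‖ ^ a := by gcongr
    _ = 2 ^ (-a / 2) * (1 + ‖y‖ ^ 2) ^ (-a / 2)
          * ((1 + ‖ξ - y‖ ^ 2) ^ (-a / 2) * ‖ξ - y‖ ^ a) := by ring
    _ ≤ 2 ^ (-a / 2) * (1 + ‖y‖ ^ 2) ^ (-a / 2) * (2 ^ (-a / 2) * (‖ξ - y‖ ^ a + 1)) := by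
          gcongr
    _ = 2 ^ (-a) * (‖ξ - y‖ ^ a + 1) * (1 + ‖y‖ ^ 2) ^ (-a / 2) := by rw [h2]; ring

section HaarMeasure

variable {E : Type*} [NormedAddCommGroup E] [NormedSpace ℝ E] [FiniteDimensional ℝ E]
  [MeasurableSpace E] [BorelSpace E] {μ : Measure E} [μ.IsAddHaarMeasure]

theorem lintegral_rpow_norm_closedBall_ne_top (hd : 1 ≤ Module.finrank ℝ E) {a : ℝ}
    (ha : -(Module.finrank ℝ E : ℝ) < a) (r : ℝ) :
    ∫⁻ x in closedBall 0 r, ENNReal.ofReal (‖x‖ ^ a) ∂μ ≠ ∞ := by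
  have hloc : LocallyIntegrable (fun x : E => ‖x‖ ^ a) μ :=
    locallyIntegrable_of_norm_le_rpow (C := 1) (α := -a) hd (by linarith)
      (ae_of_all _ fun x => by simp [abs_of_nonneg (Real.rpow_nonneg (norm_nonneg x) a)])
      (measurable_norm.pow_const a).aestronglyMeasurable
  exact (hloc.integrableOn_isCompact (isCompact_closedBall 0 r)).lintegral_lt_top.ne

theorem lintegral_rpow_norm_sub_mul_le {a : ℝ} (ha : a ≤ 0) {g : E → ℝ≥0∞} {M : ℝ≥0∞}
    (hg : ∀ x, g x ≤ M) (ξ : E) :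
    ∫⁻ y, ENNReal.ofReal (‖ξ - y‖ ^ a) * g y ∂μ ≤
      M * ∫⁻ x in closedBall 0 1, ENNReal.ofReal (‖x‖ ^ a) ∂μ + ∫⁻ y, g y ∂μ := by
  set k : E → ℝ≥0∞ := (closedBall 0 1).indicator fun x => ENNReal.ofReal (‖x‖ ^ a)
  have hk : Measurable k := by
    refine Measurable.indicator ?_ measurableSet_closedBall
    fun_prop
  have hsplit : ∀ x : E, ENNReal.ofReal (‖x‖ ^ a) ≤ k x + 1 := by
    intro x
    by_cases hx : x ∈ closedBall (0 : E) 1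
    · simp [k, hx]
    · have hx1 : 1 ≤ ‖x‖ := by simpa using (not_le.1 (mt mem_closedBall_zero_iff.2 hx)).le
      simp only [k, indicator_of_notMem hx, zero_add]
      exact ENNReal.ofReal_le_one.2 (Real.rpow_le_one_of_one_le_of_nonpos hx1 ha)
  have hks : Measurable fun y => k (ξ - y) := hk.comp (measurable_const.sub measurable_id)
  calc ∫⁻ y, ENNReal.ofReal (‖ξ - y‖ ^ a) * g y ∂μ
      ≤ ∫⁻ y, M * k (ξ - y) + g y ∂μ := by
        refine lintegral_mono fun y => ?_
        calc ENNReal.ofReal (‖ξ - y‖ ^ a) * g y ≤ (k (ξ - y) + 1) * g y := by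
              gcongr; exact hsplit _
          _ = k (ξ - y) * g y + g y := by rw [add_mul, one_mul]
          _ ≤ M * k (ξ - y) + g y := by rw [mul_comm]; gcongr; exact hg y
    _ = M * ∫⁻ y, k (ξ - y) ∂μ + ∫⁻ y, g y ∂μ := by
        rw [lintegral_add_left (hks.const_mul M), lintegral_const_mul M hks]
    _ = M * ∫⁻ x in closedBall 0 1, ENNReal.ofReal (‖x‖ ^ a) ∂μ + ∫⁻ y, g y ∂μ := by
        rw [lintegral_sub_left_eq_self k ξ, lintegral_indicator measurableSet_closedBall]


theorem ofReal_mul_lintegral_rpow_norm_sub_mul_le {a : ℝ} (ha0 : a ≤ 0) {g : E → ℝ}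
    (hg : Measurable g) (hg0 : ∀ x, 0 ≤ g x) {M : ℝ}
    (hM : ∀ x, (1 + ‖x‖ ^ 2) ^ (-a / 2) * g x ≤ M) (ξ : E) :
    ENNReal.ofReal ((1 + ‖ξ‖ ^ 2) ^ (-a / 2)) * ∫⁻ y, ENNReal.ofReal (‖ξ - y‖ ^ a * g y) ∂μ ≤
      ENNReal.ofReal (2 ^ (-a)) *
        (ENNReal.ofReal M * ∫⁻ x in closedBall 0 1, ENNReal.ofReal (‖x‖ ^ a) ∂μ
          + ∫⁻ y, ENNReal.ofReal ((1 + ‖y‖ ^ 2) ^ (-a / 2) * g y) ∂μ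
          + ∫⁻ y, ENNReal.ofReal ((1 + ‖y‖ ^ 2) ^ (-a / 2) * g y) ∂μ) := by
  set h : E → ℝ := fun x => (1 + ‖x‖ ^ 2) ^ (-a / 2) * g x with h_def
  have hh : Measurable h := by fun_prop
  have hh0 : ∀ x, 0 ≤ h x := fun x => mul_nonneg (by positivity) (hg0 x)
  have hpointwise : ∀ y, ENNReal.ofReal ((1 + ‖ξ‖ ^ 2) ^ (-a / 2)) *
      ENNReal.ofReal (‖ξ - y‖ ^ a * g y) ≤ ENNReal.ofReal (2 ^ (-a)) *
        (ENNReal.ofReal (‖ξ - y‖ ^ a) * ENNReal.ofReal (h y) + ENNReal.ofReal (h y)) := by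
    intro y
    have hk0 : 0 ≤ ‖ξ - y‖ ^ a := Real.rpow_nonneg (norm_nonneg _) a
    rw [← ENNReal.ofReal_mul (by positivity), ← ENNReal.ofReal_mul hk0,
      ← ENNReal.ofReal_add (mul_nonneg hk0 (hh0 y)) (hh0 y),
      ← ENNReal.ofReal_mul (by positivity)]
    refine ENNReal.ofReal_le_ofReal ?_
    calc _ = (1 + ‖ξ‖ ^ 2) ^ (-a / 2) * ‖ξ - y‖ ^ a * g y := by ring
      _ ≤ 2 ^ (-a) * (‖ξ - y‖ ^ a + 1) * (1 + ‖y‖ ^ 2) ^ (-a / 2) * g y :=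
        mul_le_mul_of_nonneg_right (one_add_norm_sq_rpow_mul_rpow_norm_sub_le ha0 ξ y) (hg0 y)
      _ = _ := by simp only [h_def]; ring
  rw [← lintegral_const_mul' _ _ ENNReal.ofReal_ne_top]
  calc ∫⁻ y, ENNReal.ofReal ((1 + ‖ξ‖ ^ 2) ^ (-a / 2)) *
        ENNReal.ofReal (‖ξ - y‖ ^ a * g y) ∂μ
      ≤ ∫⁻ y, ENNReal.ofReal (2 ^ (-a)) *
        (ENNReal.ofReal (‖ξ - y‖ ^ a) * ENNReal.ofReal (h y) + ENNReal.ofReal (h y)) ∂μ :=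
        lintegral_mono hpointwise
    _ = ENNReal.ofReal (2 ^ (-a)) *
        (∫⁻ y, ENNReal.ofReal (‖ξ - y‖ ^ a) * ENNReal.ofReal (h y) ∂μ
          + ∫⁻ y, ENNReal.ofReal (h y) ∂μ) := by
        rw [lintegral_const_mul' _ _ ENNReal.ofReal_ne_top,
          lintegral_add_right _ hh.ennreal_ofReal]
    _ ≤ _ := by
        gcongr
        exact lintegral_rpow_norm_sub_mul_le ha0 (fun y => ENNReal.ofReal_le_ofReal (hM y)) ξ

theorem exists_lintegral_rpow_norm_sub_mul_le (hd : 1 ≤ Module.finrank ℝ E) {a : ℝ}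
    (ha : -(Module.finrank ℝ E : ℝ) < a) (ha0 : a ≤ 0) {g : E → ℝ} (hg : Measurable g)
    (hg0 : ∀ x, 0 ≤ g x) {M : ℝ} (hM : ∀ x, (1 + ‖x‖ ^ 2) ^ (-a / 2) * g x ≤ M)
    (hint : Integrable (fun x => (1 + ‖x‖ ^ 2) ^ (-a / 2) * g x) μ) :
    ∃ C : ℝ, 0 < C ∧ ∀ ξ, ∫⁻ y, ENNReal.ofReal (‖ξ - y‖ ^ a * g y) ∂μ ≤
      ENNReal.ofReal (C * (1 + ‖ξ‖ ^ 2) ^ (a / 2)) := by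
  set D : ℝ≥0∞ := ENNReal.ofReal (2 ^ (-a)) *
    (ENNReal.ofReal M * ∫⁻ x in closedBall 0 1, ENNReal.ofReal (‖x‖ ^ a) ∂μ
      + ∫⁻ y, ENNReal.ofReal ((1 + ‖y‖ ^ 2) ^ (-a / 2) * g y) ∂μ
      + ∫⁻ y, ENNReal.ofReal ((1 + ‖y‖ ^ 2) ^ (-a / 2) * g y) ∂μ)
  have hD : D ≠ ∞ := by
    have := lintegral_rpow_norm_closedBall_ne_top (μ := μ) hd ha 1
    have := hint.lintegral_lt_top.ne
    finiteness
  refine ⟨D.toReal + 1, by positivity, fun ξ => ?_⟩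
  have hw : 0 < (1 + ‖ξ‖ ^ 2) ^ (-a / 2) := by positivity
  calc ∫⁻ y, ENNReal.ofReal (‖ξ - y‖ ^ a * g y) ∂μ
      ≤ D / ENNReal.ofReal ((1 + ‖ξ‖ ^ 2) ^ (-a / 2)) := by
        rw [ENNReal.le_div_iff_mul_le (Or.inl (by simpa using hw))
          (Or.inl ENNReal.ofReal_ne_top), mul_comm]
        exact ofReal_mul_lintegral_rpow_norm_sub_mul_le ha0 hg hg0 hM ξ
    _ = D * ENNReal.ofReal ((1 + ‖ξ‖ ^ 2) ^ (a / 2)) := by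
        rw [div_eq_mul_inv, ← ENNReal.ofReal_inv_of_pos hw, ← Real.rpow_neg (by positivity),
          neg_div, neg_neg]
    _ ≤ ENNReal.ofReal ((D.toReal + 1) * (1 + ‖ξ‖ ^ 2) ^ (a / 2)) := by
        rw [ENNReal.ofReal_mul (by positivity)]
        gcongr
        rw [ENNReal.le_ofReal_iff_toReal_le hD (by positivity)]
        linarith

end HaarMeasure

theorem one_add_rpow_mul_exp_neg_div_four_le {t s : ℝ} (ht : 0 ≤ t) (hs : s ≤ 1) :
    (1 + t) ^ s * Real.exp (-t / 4) ≤ 8 * Real.exp (-(1 / 8) * t) := by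
  have hpow : (1 + t) ^ s ≤ 1 + t := by
    simpa using Real.rpow_le_rpow_of_exponent_le (by linarith : (1 : ℝ) ≤ 1 + t) hs
  have hexp : 1 + t ≤ 8 * Real.exp (t / 8) := by linarith [Real.add_one_le_exp (t / 8)]
  calc (1 + t) ^ s * Real.exp (-t / 4) ≤ 8 * Real.exp (t / 8) * Real.exp (-t / 4) := by
        gcongr; exact hpow.trans hexp
    _ = 8 * Real.exp (-(1 / 8) * t) := by rw [mul_assoc, ← Real.exp_add]; ring_nf

section Gaussian

variable {V : Type*} [NormedAddCommGroup V] [InnerProductSpace ℝ V] [FiniteDimensional ℝ V]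
  [MeasurableSpace V] [BorelSpace V]

theorem integrable_exp_neg_mul_sq_norm {b : ℝ} (hb : 0 < b) :
    Integrable fun v : V => Real.exp (-b * ‖v‖ ^ 2) :=
  Integrable.of_integral_ne_zero <| by
    rw [GaussianFourier.integral_rexp_neg_mul_sq_norm hb]; positivity

theorem exists_lintegral_rpow_norm_sub_mul_exp_le (hd : 1 ≤ Module.finrank ℝ V) {a : ℝ}
    (ha : -(Module.finrank ℝ V : ℝ) < a) (ha2 : -2 ≤ a) (ha0 : a ≤ 0) :
    ∃ C : ℝ, 0 < C ∧ ∀ ξ : V, ∫⁻ y, ENNReal.ofReal (‖ξ - y‖ ^ a * Real.exp (-‖y‖ ^ 2 / 4)) ≤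
      ENNReal.ofReal (C * (1 + ‖ξ‖ ^ 2) ^ (a / 2)) := by
  have hweight : ∀ x : V, (1 + ‖x‖ ^ 2) ^ (-a / 2) * Real.exp (-‖x‖ ^ 2 / 4) ≤
      8 * Real.exp (-(1 / 8) * ‖x‖ ^ 2) :=
    fun x => one_add_rpow_mul_exp_neg_div_four_le (by positivity) (by linarith)
  refine exists_lintegral_rpow_norm_sub_mul_le hd ha ha0 (by fun_prop)
    (fun _ => (Real.exp_pos _).le) (M := 8) (fun x => (hweight x).trans ?_) ?_
  · simp
  · refine ((integrable_exp_neg_mul_sq_norm (by norm_num : (0 : ℝ) < 1 / 8)).const_mul 8).mono'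
      (by fun_prop : Measurable _).aestronglyMeasurable (ae_of_all _ fun x => ?_)
    rw [Real.norm_of_nonneg (by positivity)]
    exact hweight x

end Gaussian

theorem integrable_and_integral_le_of_lintegral_ofReal_le {α : Type*} [MeasurableSpace α]
    {μ : Measure α} {f : α → ℝ} (hf : 0 ≤ f) (hfm : AEStronglyMeasurable f μ) {c : ℝ}
    (hc : 0 ≤ c) (h : ∫⁻ x, ENNReal.ofReal (f x) ∂μ ≤ ENNReal.ofReal c) :
    Integrable f μ ∧ ∫ x, f x ∂μ ≤ c := by
  refine ⟨(lintegral_ofReal_ne_top_iff_integrable hfm (ae_of_all _ hf)).1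
    (ne_top_of_le_ne_top ENNReal.ofReal_ne_top h), ?_⟩
  rw [integral_eq_lintegral_of_nonneg_ae (ae_of_all _ hf) hfm]
  exact ENNReal.toReal_le_of_le_ofReal hc h

theorem sq_ite_sub_mul_div_norm_sq_le_one {ι : Type*} [Fintype ι] [DecidableEq ι]
    (z : EuclideanSpace ℝ ι) (i j : ι) :
    ((if i = j then (1 : ℝ) else 0) - z i * z j / ‖z‖ ^ 2) ^ 2 ≤ 1 := by
  have hcoord : ∀ k, |z k| ≤ ‖z‖ := fun k => by simpa using PiLp.norm_apply_le z k
  have habs : |z i * z j / ‖z‖ ^ 2| ≤ 1 := by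
    rw [abs_div, abs_mul, abs_of_nonneg (by positivity : (0 : ℝ) ≤ ‖z‖ ^ 2)]
    refine div_le_one_of_le₀ ?_ (by positivity)
    rw [sq]
    exact mul_le_mul (hcoord i) (hcoord j) (abs_nonneg _) (norm_nonneg _)
  rw [abs_le] at habs
  split_ifs with hij
  · subst hij
    have : 0 ≤ z i * z i / ‖z‖ ^ 2 := div_nonneg (mul_self_nonneg _) (by positivity)
    nlinarith
  · nlinarith

theorem Bij_sq_le (γ : ℝ) (i j : Fin 3) (z : E3) : Bij γ i j z ^ 2 ≤ ‖z‖ ^ (2 * (γ + 2)) := by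
  rw [Bij, mul_pow, mul_comm 2, Real.rpow_mul (norm_nonneg z), Real.rpow_two]
  exact mul_le_of_le_one_left (by positivity) (sq_ite_sub_mul_div_norm_sq_le_one z i j)

theorem sqrt_Mx_le (ξ : E3) : Real.sqrt (Mx ξ) ≤ Real.exp (-‖ξ‖ ^ 2 / 4) := by
  have hc : (2 * π) ^ (-(3 : ℝ) / 2) ≤ 1 :=
    Real.rpow_le_one_of_one_le_of_nonpos (by linarith [Real.pi_gt_three]) (by norm_num)
  rw [Real.sqrt_le_left (Real.exp_pos _).le, ← Real.exp_nat_mul, Mx]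
  calc (2 * π) ^ (-(3 : ℝ) / 2) * Real.exp (-‖ξ‖ ^ 2 / 2) ≤ 1 * Real.exp (-‖ξ‖ ^ 2 / 2) := by
        gcongr
    _ = Real.exp ((2 : ℕ) * (-‖ξ‖ ^ 2 / 4)) := by push_cast; ring_nf

theorem kernel_convolution_estimate (γ : ℝ) (hγ1 : -3 ≤ γ) (hγ2 : γ < -2) :
    ∃ C > (0 : ℝ),
      (∀ ξ : E3,
        (∫ ξ' : E3, ‖ξ - ξ'‖ ^ (2 * (γ + 2)) * Real.exp (-‖ξ'‖ ^ 2 / 4))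
          ≤ C * (1 + ‖ξ‖ ^ 2) ^ (γ + 2)) ∧
      (∀ i j : Fin 3, ∀ ξ : E3,
        Real.sqrt (∫ ξ' : E3, (Bij γ i j (ξ - ξ')) ^ 2 * Real.sqrt (Mx ξ'))
          ≤ C * jap ξ ^ (γ + 2)) := by
  obtain ⟨K, hK, hconv⟩ := exists_lintegral_rpow_norm_sub_mul_exp_le (V := E3)
    (a := 2 * (γ + 2)) (by simp) (by simp; linarith) (by linarith) (by linarith)
  have hreal : ∀ ξ : E3,
      Integrable (fun ξ' => ‖ξ - ξ'‖ ^ (2 * (γ + 2)) * Real.exp (-‖ξ'‖ ^ 2 / 4)) ∧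
      ∫ ξ', ‖ξ - ξ'‖ ^ (2 * (γ + 2)) * Real.exp (-‖ξ'‖ ^ 2 / 4) ≤ K * (1 + ‖ξ‖ ^ 2) ^ (γ + 2) :=
    fun ξ => integrable_and_integral_le_of_lintegral_ofReal_le (fun _ => by positivity)
      (by fun_prop : Measurable _).aestronglyMeasurable (by positivity)
      (by simpa [show 2 * (γ + 2) / 2 = γ + 2 by ring] using hconv ξ)
  refine ⟨max K √K, lt_max_of_lt_left hK,
    fun ξ => (hreal ξ).2.trans (by gcongr; exact le_max_left _ _), fun i j ξ => ?_⟩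
  have hkernel : ∀ ξ', Bij γ i j (ξ - ξ') ^ 2 * √(Mx ξ') ≤
      ‖ξ - ξ'‖ ^ (2 * (γ + 2)) * Real.exp (-‖ξ'‖ ^ 2 / 4) :=
    fun ξ' => mul_le_mul (Bij_sq_le γ i j _) (sqrt_Mx_le ξ') (Real.sqrt_nonneg _) (by positivity)
  calc √(∫ ξ', Bij γ i j (ξ - ξ') ^ 2 * √(Mx ξ'))
      ≤ √(K * (1 + ‖ξ‖ ^ 2) ^ (γ + 2)) := by
        refine Real.sqrt_le_sqrt ((integral_mono_of_nonneg (ae_of_all _ fun _ => by positivity)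
          (hreal ξ).1 (ae_of_all _ hkernel)).trans (hreal ξ).2)
    _ = √K * jap ξ ^ (γ + 2) := by
        rw [Real.sqrt_mul hK.le, jap]
        congr 1
        rw [Real.sqrt_eq_rpow, Real.sqrt_eq_rpow, ← Real.rpow_mul (by positivity),
          ← Real.rpow_mul (by positivity), mul_comm]
    _ ≤ max K √K * jap ξ ^ (γ + 2) :=
        mul_le_mul_of_nonneg_right (le_max_right _ _) (Real.rpow_nonneg (Real.sqrt_nonneg _) _)
end

section
/- Let 0 < p < 1 and κ > 0. There exists C > 0 (depending only on p and κ) such that for all t ≥ 0: ∫₀ᵗ (1+s)^{−5/2} e^{κ(1+s)^p} ds ≤ C (1+t)^{−(3/2+p)} e^{κ(1+t)^p}. -/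
open MeasureTheory Real

/-!
With `F s = (1 + s) ^ (r + 1 - p) * exp (κ * (1 + s) ^ p)` one computes
`F' s = (1 + s) ^ r * exp (κ * (1 + s) ^ p) * (κ * p + (r + 1 - p) * (1 + s) ^ (-p))`,
and since `p > 0` the last factor tends to `κ * p`. Hence beyond some `a` the derivative `F'`
dominates `κ * p / 2` times the integrand, and the integral over `[a, t]` is at most
`2 / (κ * p) * F t`. The integral over `[0, a]` is a constant, which is absorbed because `F`
is bounded below by a positive constant on `[0, ∞)`.
-/

open Set Filter Topology

section Comparison

variable {f F F' : ℝ → ℝ} {a c t : ℝ}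

theorem mul_integral_le_sub_of_le_deriv (hat : a ≤ t) (hf : ContinuousOn f (Icc a t))
    (hF : ContinuousOn F (Icc a t)) (hderiv : ∀ s ∈ Ioo a t, HasDerivAt F (F' s) s)
    (hle : ∀ s ∈ Ioo a t, c * f s ≤ F' s) :
    c * ∫ s in a..t, f s ≤ F t - F a := by
  rw [← intervalIntegral.integral_const_mul]
  exact intervalIntegral.integral_le_sub_of_hasDeriv_right_of_le hat hF
    (fun s hs => (hderiv s hs).hasDerivWithinAt) (hf.const_mul c).integrableOn_Icc hle

theorem exists_integral_le_mul_of_le_deriv (ha : 0 ≤ a) (hc : 0 < c)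
    (hf : ContinuousOn f (Ici 0)) (hf₀ : ∀ s, 0 ≤ s → 0 ≤ f s)
    (hF : ContinuousOn F (Ici 0)) (hF₀ : ∀ s, 0 ≤ s → 0 < F s)
    (hderiv : ∀ s, a < s → HasDerivAt F (F' s) s) (hle : ∀ s, a < s → c * f s ≤ F' s) :
    ∃ C > 0, ∀ t, 0 ≤ t → ∫ s in (0 : ℝ)..t, f s ≤ C * F t := by
  have hint : ∀ u v, 0 ≤ u → u ≤ v → IntervalIntegrable f volume u v := fun u v hu huv =>
    (hf.mono fun s hs => hu.trans hs.1).intervalIntegrable_of_Icc huv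
  have htail : ∀ t, a ≤ t → c * ∫ s in a..t, f s ≤ F t - F a := fun t hat =>
    mul_integral_le_sub_of_le_deriv hat (hf.mono fun s hs => ha.trans hs.1)
      (hF.mono fun s hs => ha.trans hs.1) (fun s hs => hderiv s hs.1) (fun s hs => hle s hs.1)
  have htail₀ : ∀ t, a ≤ t → 0 ≤ ∫ s in a..t, f s := fun t hat =>
    intervalIntegral.integral_nonneg hat fun s hs => hf₀ s (ha.trans hs.1)
  set A := ∫ s in (0 : ℝ)..a, f s
  have hA : 0 ≤ A := intervalIntegral.integral_nonneg ha fun s hs => hf₀ s hs.1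
  have hbound : ∀ t, 0 ≤ t → ∫ s in (0 : ℝ)..t, f s ≤ A + F t / c := by
    intro t ht
    have hFc : 0 < F t / c := div_pos (hF₀ t ht) hc
    rcases le_total t a with hta | hat
    · have hhead := intervalIntegral.integral_mono_interval le_rfl ht hta
        (ae_restrict_of_forall_mem measurableSet_Ioc fun s hs => hf₀ s hs.1.le) (hint 0 a le_rfl ha)
      linarith
    · rw [← intervalIntegral.integral_add_adjacent_intervals (hint 0 a le_rfl ha) (hint a t ha hat)]
      have htail' : ∫ s in a..t, f s ≤ F t / c := by
        rw [le_div_iff₀ hc]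
        linarith [htail t hat, hF₀ a ha]
      linarith
  obtain ⟨m, hm, hmF⟩ := isCompact_Icc.exists_forall_le' (hF.mono Icc_subset_Ici_self)
    fun s hs => hF₀ s hs.1
  have hlower : ∀ t, 0 ≤ t → m ≤ F t := by
    intro t ht
    rcases le_total t a with hta | hat
    · exact hmF t ⟨ht, hta⟩
    · nlinarith [hmF a ⟨ha, le_rfl⟩, htail t hat, htail₀ t hat]
  refine ⟨A / m + 1 / c, by positivity, fun t ht => (hbound t ht).trans ?_⟩
  have hAF : A ≤ A / m * F t := by
    rw [div_mul_eq_mul_div, le_div_iff₀ hm]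
    exact mul_le_mul_of_nonneg_left (hlower t ht) hA
  rw [add_mul, div_eq_mul_one_div (F t) c, mul_comm (F t)]
  linarith

end Comparison

theorem hasDerivAt_one_add_rpow_mul_exp (r p κ : ℝ) {s : ℝ} (hs : 0 < 1 + s) :
    HasDerivAt (fun s : ℝ => (1 + s) ^ (r + 1 - p) * exp (κ * (1 + s) ^ p))
      ((1 + s) ^ r * exp (κ * (1 + s) ^ p) * (κ * p + (r + 1 - p) * (1 + s) ^ (-p))) s := by
  have hu : HasDerivAt (fun s : ℝ => 1 + s) 1 s := (hasDerivAt_id s).const_add 1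
  refine ((hu.rpow_const (p := r + 1 - p) (Or.inl hs.ne')).mul
    ((hu.rpow_const (p := p) (Or.inl hs.ne')).const_mul κ).exp).congr_deriv ?_
  have e₁ : (1 + s) ^ r * (1 + s) ^ (-p) = (1 + s) ^ (r + 1 - p - 1) := by
    rw [← rpow_add hs]; ring_nf
  have e₂ : (1 + s) ^ (r + 1 - p) * (1 + s) ^ (p - 1) = (1 + s) ^ r := by
    rw [← rpow_add hs]; ring_nf
  rw [← e₁, ← e₂]
  ring

theorem continuousOn_one_add_rpow_mul_exp (r p κ : ℝ) :
    ContinuousOn (fun s : ℝ => (1 + s) ^ r * exp (κ * (1 + s) ^ p)) (Ici 0) := by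
  have hbase : ∀ q : ℝ, ContinuousOn (fun s : ℝ => (1 + s) ^ q) (Ici 0) := fun q =>
    ContinuousOn.rpow_const (f := fun s => 1 + s) (by fun_prop) fun s hs =>
      Or.inl (by linarith [mem_Ici.1 hs])
  exact (hbase r).mul ((continuousOn_const.mul (hbase p)).rexp)

theorem exists_integral_one_add_rpow_mul_exp_le {p κ : ℝ} (r : ℝ) (hp : 0 < p) (hκ : 0 < κ) :
    ∃ C > 0, ∀ t, 0 ≤ t → ∫ s in (0 : ℝ)..t, (1 + s) ^ r * exp (κ * (1 + s) ^ p) ≤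
      C * ((1 + t) ^ (r + 1 - p) * exp (κ * (1 + t) ^ p)) := by
  have hfactor : Tendsto (fun s : ℝ => κ * p + (r + 1 - p) * (1 + s) ^ (-p)) atTop
      (𝓝 (κ * p)) := by
    simpa using ((tendsto_rpow_neg_atTop hp).comp
      (tendsto_atTop_add_const_left atTop 1 tendsto_id)).const_mul (r + 1 - p) |>.const_add (κ * p)
  obtain ⟨a, ha⟩ := eventually_atTop.1
    (hfactor.eventually_const_lt (half_lt_self (mul_pos hκ hp)))
  have hpos : ∀ q s : ℝ, 0 ≤ s → 0 < (1 + s) ^ q * exp (κ * (1 + s) ^ p) := fun q s hs =>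
    mul_pos (rpow_pos_of_pos (by linarith) q) (exp_pos _)
  refine exists_integral_le_mul_of_le_deriv (le_max_right a 0) (by positivity : 0 < κ * p / 2)
    (continuousOn_one_add_rpow_mul_exp r p κ) (fun s hs => (hpos r s hs).le)
    (continuousOn_one_add_rpow_mul_exp _ p κ) (hpos _)
    (fun s hs => hasDerivAt_one_add_rpow_mul_exp r p κ (by linarith [le_max_right a 0])) ?_
  intro s hs
  rw [mul_comm]
  exact mul_le_mul_of_nonneg_left (ha s (le_max_left a 0 |>.trans hs.le)).le
    (hpos r s (le_max_right a 0 |>.trans hs.le)).le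

theorem time_weighted_integral_estimate_general (p κ : ℝ) (hp1 : 0 < p)
    (hκ : 0 < κ) :
    ∃ C > (0 : ℝ), ∀ t : ℝ, 0 ≤ t →
      (∫ s in (0 : ℝ)..t, (1 + s) ^ (-(5 : ℝ) / 2) * Real.exp (κ * (1 + s) ^ p))
        ≤ C * (1 + t) ^ (-(3 / 2 + p)) * Real.exp (κ * (1 + t) ^ p) := by
  obtain ⟨C, hC, hbound⟩ := exists_integral_one_add_rpow_mul_exp_le (-(5 : ℝ) / 2) hp1 hκ
  have hexp : -(5 : ℝ) / 2 + 1 - p = -(3 / 2 + p) := by ring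
  refine ⟨C, hC, fun t ht => ?_⟩
  rw [mul_assoc, ← hexp]
  exact hbound t ht

theorem time_weighted_integral_estimate (p κ : ℝ) (hp1 : 0 < p) (hp2 : p < 1)
    (hκ : 0 < κ) :
    ∃ C > (0 : ℝ), ∀ t : ℝ, 0 ≤ t →
      (∫ s in (0 : ℝ)..t, (1 + s) ^ (-(5 : ℝ) / 2) * Real.exp (κ * (1 + s) ^ p))
        ≤ C * (1 + t) ^ (-(3 / 2 + p)) * Real.exp (κ * (1 + t) ^ p) :=
  time_weighted_integral_estimate_general p κ hp1 hκ
end
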